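/- For each integer $n \ge 4$, the power series $G_n(q) = \frac{q^{2n}}{(1-q^3)(1-q^{2n-3})(1+q^{2n})}$ has non-negative coefficients. -/

import Mathlib

/-!
With `N = a + b`, multiplying by `(1 - q^N) / (1 - q^N)` and using
`q^N (1 - q^N) = q^N (1 - q^a) + q^(N+a) (1 - q^b)` splits `q^N / ((1 - q^a) (1 - q^b) (1 + q^N))`
into `q^N / ((1 - q^b) (1 - q^(2N))) + q^(N+a) / ((1 - q^a) (1 - q^(2N)))`: sums of products of
monomials and geometric series, all with non-negative coefficients. Power-series coefficients are
determined by the values on `(0, 1)`: the constant term is the limit at `0⁺` (Tannery's theorem),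
and one peels off one coefficient at a time. The theorem is the case `a = 3`, `b = 2n - 3`.
-/

open Finset Filter Topology Set

def HasNonnegExpansion (F : ℝ → ℝ) : Prop :=
  ∃ a : ℕ → ℝ, 0 ≤ a ∧ ∀ q ∈ Ioo (0 : ℝ) 1, HasSum (fun m => a m * q ^ m) (F q)

namespace HasNonnegExpansion

variable {F G : ℝ → ℝ}

lemma congr (hF : HasNonnegExpansion F) (h : EqOn F G (Ioo 0 1)) : HasNonnegExpansion G := by
  obtain ⟨a, ha0, ha⟩ := hF
  exact ⟨a, ha0, fun q hq => h hq ▸ ha q hq⟩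

lemma pow (s : ℕ) : HasNonnegExpansion fun q => q ^ s := by
  refine ⟨fun m => if m = s then 1 else 0, fun m => by dsimp only; positivity, fun q _ => ?_⟩
  convert hasSum_ite_eq s (q ^ s) using 2 with m
  split_ifs with h <;> simp [h]

lemma inv_one_sub_pow {p : ℕ} (hp : p ≠ 0) : HasNonnegExpansion fun q => (1 - q ^ p)⁻¹ := by
  refine ⟨fun m => if p ∣ m then 1 else 0, fun m => by dsimp only; positivity, fun q hq => ?_⟩
  have hgeom := hasSum_geometric_of_lt_one (pow_nonneg hq.1.le p) (pow_lt_one₀ hq.1.le hq.2 hp)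
  rw [← (mul_right_injective₀ hp).hasSum_iff]
  · convert hgeom using 1
    funext j
    simp [pow_mul]
  · rintro m hm
    have hndvd : ¬p ∣ m := fun ⟨j, hj⟩ => hm ⟨j, hj.symm⟩
    simp [hndvd]

lemma add (hF : HasNonnegExpansion F) (hG : HasNonnegExpansion G) :
    HasNonnegExpansion (F + G) := by
  obtain ⟨a, ha0, ha⟩ := hF
  obtain ⟨b, hb0, hb⟩ := hG
  exact ⟨a + b, add_nonneg ha0 hb0, fun q hq => by
    simpa [add_mul] using (ha q hq).add (hb q hq)⟩

lemma mul (hF : HasNonnegExpansion F) (hG : HasNonnegExpansion G) :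
    HasNonnegExpansion (F * G) := by
  obtain ⟨a, ha0, ha⟩ := hF
  obtain ⟨b, hb0, hb⟩ := hG
  refine ⟨fun m => ∑ i ∈ range (m + 1), a i * b (m - i),
    fun m => sum_nonneg fun i _ => mul_nonneg (ha0 i) (hb0 _), fun q hq => ?_⟩
  have hprod := hasSum_sum_range_mul_of_summable_norm (f := fun m => a m * q ^ m)
    (g := fun m => b m * q ^ m) (ha q hq).summable.norm (hb q hq).summable.norm
  rw [(ha q hq).tsum_eq, (hb q hq).tsum_eq] at hprod
  refine hprod.congr_fun fun m => ?_
  rw [sum_mul]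
  refine sum_congr rfl fun i hi => ?_
  rw [← pow_mul_pow_sub q (Nat.lt_succ_iff.mp (mem_range.mp hi))]
  ring

end HasNonnegExpansion

lemma tendsto_tsum_mul_pow_nhdsGT_zero {a : ℕ → ℝ}
    (ha : ∀ q ∈ Ioo (0 : ℝ) 1, Summable fun m => a m * q ^ m) :
    Tendsto (fun q => ∑' m, a m * q ^ m) (𝓝[>] 0) (𝓝 (a 0)) := by
  have hbound : Summable fun m => ‖a m * (1 / 2 : ℝ) ^ m‖ :=
    (ha _ ⟨by norm_num, by norm_num⟩).norm
  have hlim := tendsto_tsum_of_dominated_convergence (𝓕 := 𝓝[>] 0) (g := fun m => a m * 0 ^ m)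
    hbound (fun m => ((continuous_pow m).const_mul (a m)).continuousWithinAt.tendsto) ?_
  · rwa [tsum_eq_single 0 fun m hm => by simp [hm], pow_zero, mul_one] at hlim
  · filter_upwards [Ioo_mem_nhdsGT (by norm_num : (0 : ℝ) < 1 / 2)] with q hq m
    rw [norm_mul, norm_mul, norm_pow, norm_pow, Real.norm_of_nonneg hq.1.le,
      Real.norm_of_nonneg (by norm_num : (0 : ℝ) ≤ 1 / 2)]
    gcongr
    · exact hq.1.le
    · exact hq.2.le

lemma coeff_zero_eq_zero_of_hasSum_mul_pow_zero {a : ℕ → ℝ}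
    (h : ∀ q ∈ Ioo (0 : ℝ) 1, HasSum (fun m => a m * q ^ m) 0) : a 0 = 0 := by
  refine tendsto_nhds_unique (tendsto_tsum_mul_pow_nhdsGT_zero fun q hq => (h q hq).summable) ?_
  refine tendsto_const_nhds.congr' ?_
  filter_upwards [Ioo_mem_nhdsGT one_pos] with q hq using (h q hq).tsum_eq.symm

lemma eq_zero_of_hasSum_mul_pow_zero {a : ℕ → ℝ}
    (h : ∀ q ∈ Ioo (0 : ℝ) 1, HasSum (fun m => a m * q ^ m) 0) : a = 0 := by
  funext m
  induction m generalizing a with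
  | zero => exact coeff_zero_eq_zero_of_hasSum_mul_pow_zero h
  | succ m ih =>
    refine ih (a := fun j => a (j + 1)) fun q hq => ?_
    have htail := (hasSum_nat_add_iff' 1).mpr (h q hq)
    simp only [range_one, sum_singleton, pow_zero, mul_one,
      coeff_zero_eq_zero_of_hasSum_mul_pow_zero h, sub_zero] at htail
    have hdiv := htail.mul_right q⁻¹
    rw [zero_mul] at hdiv
    refine hdiv.congr_fun fun j => ?_
    field_simp [hq.1.ne']
    ring

lemma eq_of_hasSum_mul_pow {a b : ℕ → ℝ} {F : ℝ → ℝ}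
    (ha : ∀ q ∈ Ioo (0 : ℝ) 1, HasSum (fun m => a m * q ^ m) (F q))
    (hb : ∀ q ∈ Ioo (0 : ℝ) 1, HasSum (fun m => b m * q ^ m) (F q)) : a = b :=
  sub_eq_zero.mp <| eq_zero_of_hasSum_mul_pow_zero fun q hq => by
    simpa [sub_mul] using (ha q hq).sub (hb q hq)

lemma pow_add_div_eq {a b : ℕ} (ha : a ≠ 0) (hb : b ≠ 0) {q : ℝ}
    (hq : q ∈ Ioo (0 : ℝ) 1) :
    q ^ (a + b) / ((1 - q ^ a) * (1 - q ^ b) * (1 + q ^ (a + b))) =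
      q ^ (a + b) * (1 - q ^ b)⁻¹ * (1 - q ^ (2 * (a + b)))⁻¹ +
        q ^ (a + b + a) * (1 - q ^ a)⁻¹ * (1 - q ^ (2 * (a + b)))⁻¹ := by
  have one_sub_pow_ne_zero : ∀ {p : ℕ}, p ≠ 0 → 1 - q ^ p ≠ 0 := fun hp =>
    (sub_pos.mpr (pow_lt_one₀ hq.1.le hq.2 hp)).ne'
  have one_add_pow_ne_zero : 1 + q ^ (a + b) ≠ 0 := by have := hq.1; positivity
  have hfac : 1 - q ^ (2 * (a + b)) = (1 - q ^ (a + b)) * (1 + q ^ (a + b)) := by ring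
  rw [hfac]
  field_simp [one_sub_pow_ne_zero ha, one_sub_pow_ne_zero hb,
    one_sub_pow_ne_zero (p := a + b) (by omega), one_add_pow_ne_zero]
  ring

lemma hasNonnegExpansion_pow_add_div {a b : ℕ} (ha : a ≠ 0) (hb : b ≠ 0) :
    HasNonnegExpansion fun q => q ^ (a + b) / ((1 - q ^ a) * (1 - q ^ b) * (1 + q ^ (a + b))) := by
  open HasNonnegExpansion in
  have h2N := inv_one_sub_pow (p := 2 * (a + b)) (by omega)
  have hsum := (((pow (a + b)).mul (inv_one_sub_pow hb)).mul h2N).add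
    (((pow (a + b + a)).mul (inv_one_sub_pow ha)).mul h2N)
  exact hsum.congr fun q hq => (pow_add_div_eq ha hb hq).symm

theorem stmt13 (n : ℕ) (hn : 4 ≤ n) (c : ℕ → ℝ)
    (h : ∀ q : ℝ, 0 < q → q < 1 →
      HasSum (fun m => c m * q ^ m)
        (q ^ (2 * n) / ((1 - q ^ 3) * (1 - q ^ (2 * n - 3)) * (1 + q ^ (2 * n))))) :
    ∀ m : ℕ, 0 ≤ c m := by
  set k := 2 * n - 3
  have h2n : 2 * n = 3 + k := by omega
  obtain ⟨a, ha0, ha⟩ :=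
    hasNonnegExpansion_pow_add_div (a := 3) (b := k) (by norm_num) (by omega)
  have hca : c = a := eq_of_hasSum_mul_pow (fun q hq => h2n ▸ h q hq.1 hq.2) ha
  exact hca ▸ ha0
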